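/- Let c, d : ℕ×ℤ → ℚ be functions such that for every m ∈ ℕ the set {n ∈ ℤ : c(m,n) ≠ 0 or d(m,n) ≠ 0} is finite, and let A, B ∈ ℚ. Then in the ring of formal power series in p with coefficients in ℚ[y^{±1}][[q]] one has exp( Σ_{a≥1} Σ_{b≥1} Σ_{m≥0} Σ_{l∈ℤ} ( c(mb,l) + (b·l·A + b²·B)·d(mb,l) ) · p^{ab} y^{al} q^{am} / a ) = ∏_{b≥1, m≥0, l∈ℤ} (1 − p^{b} y^{l} q^{m})^{ −c(mb,l) − l·b·A·d(mb,l) − b²·B·d(mb,l) }, where for a rational exponent α one sets (1−t)^{α} := exp(α·log(1−t)), and both the sum and the product converge p-adically (each factor of the product is ≡ 1 modulo p). -/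

import Mathlib

/-!
Each factor of the product is `exp (α · log (1 - p^b y^l q^m))`, so the finite product that
computes the `p^N q^M`-coefficient is the exponential of a finite sum: `exp` turns sums of series
without constant term into products, because modulo any power of `X` it is the exponential of a
nilpotent element. Expanding `log (1 - t) = -∑ t^a / a`, the `p^n q^m'`-coefficient of that sum is
a sum over the common divisors `a` of `n` and `m'` (with `b = n / a`, `m = m' / a`), which is the
corresponding coefficient of the exponent on the left for all `n ≤ N`, `m' ≤ M`. Reducing modulo
`(p^(N+1), q^(M+1))`, where `exp` again becomes a nilpotent exponential, shows that the
`p^N q^M`-coefficient of `exp u` only depends on these coefficients of `u`.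
-/

open PowerSeries LaurentPolynomial

noncomputable section
namespace Formal

/-- The ring `ℚ[y^{±1}]` of Laurent polynomials in `y`. -/
abbrev L : Type := LaurentPolynomial ℚ

/-- The ring `ℚ[y^{±1}][[q]][[p]]` (outer variable `p`, inner variable `q`). -/
abbrev A3 : Type := PowerSeries (PowerSeries L)

/-- `log u := -∑_{k≥1} (1-u)^k / k` (valid coefficientwise when `constantCoeff u = 1`). -/
def log {R : Type*} [CommRing R] [Algebra ℚ R] (u : PowerSeries R) : PowerSeries R :=
  PowerSeries.mk fun N => ∑ k ∈ Finset.Icc 1 N, (-(k : ℚ)⁻¹) • coeff (R := R) N ((1 - u) ^ k)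

/-- `exp v := ∑_{k≥0} v^k / k!` (valid coefficientwise when `constantCoeff v = 0`). -/
def expS {R : Type*} [CommRing R] [Algebra ℚ R] (v : PowerSeries R) : PowerSeries R :=
  PowerSeries.mk fun N => ∑ k ∈ Finset.range (N + 1), ((k.factorial : ℚ)⁻¹) • coeff (R := R) N (v ^ k)

/-- Rational power `(1−t)^α := exp (α · log (1−t))`, for `u = 1−t` with constant term `1`. -/
def rpow {R : Type*} [CommRing R] [Algebra ℚ R] (u : PowerSeries R) (α : ℚ) : PowerSeries R :=
  expS (α • log u)

/-- The monomial `p^b q^m y^l` in `ℚ[y^{±1}][[q]][[p]]`. -/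
def mon (b m : ℕ) (l : ℤ) : A3 :=
  PowerSeries.C (R := PowerSeries L) (PowerSeries.C (R := L) (T l) * X ^ m) * X ^ b

theorem coeff_C_mul_X_pow_pow {R : Type*} [CommSemiring R] (a : R) (b k n : ℕ) :
    coeff n ((PowerSeries.C a * X ^ b) ^ k) = if n = b * k then a ^ k else 0 := by
  rw [mul_pow, ← map_pow, ← pow_mul, coeff_C_mul_X_pow]

theorem map_pow_eq_zero_of_constantCoeff_eq_zero {R S F : Type*} [CommRing R] [CommRing S]
    [FunLike F R⟦X⟧ S] [RingHomClass F R⟦X⟧ S] (f : F) {K : ℕ} (hK : f X ^ K = 0) {w : R⟦X⟧}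
    (hw : constantCoeff w = 0) : f w ^ K = 0 := by
  obtain ⟨v, rfl⟩ := X_dvd_iff.mpr hw
  rw [map_mul, mul_pow, hK, zero_mul]

/-- Reduction of `R[[q]][[p]]` modulo `(p ^ (N + 1), q ^ (M + 1))`. -/
def truncRect {R : Type*} [CommRing R] (N M : ℕ) :
    R⟦X⟧⟦X⟧ →+* (R⟦X⟧ ⧸ Ideal.span {(X : R⟦X⟧) ^ (M + 1)})⟦X⟧ ⧸
      Ideal.span {(X : (R⟦X⟧ ⧸ Ideal.span {(X : R⟦X⟧) ^ (M + 1)})⟦X⟧) ^ (N + 1)} :=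
  (Ideal.Quotient.mk _).comp (map (Ideal.Quotient.mk _))

theorem truncRect_eq_zero_iff {R : Type*} [CommRing R] {N M : ℕ} {f : R⟦X⟧⟦X⟧} :
    truncRect N M f = 0 ↔ ∀ n ≤ N, ∀ m ≤ M, coeff m (coeff n f) = 0 := by
  simp only [truncRect, RingHom.comp_apply, Ideal.Quotient.eq_zero_iff_mem,
    Ideal.mem_span_singleton, X_pow_dvd_iff, coeff_map, Nat.lt_succ_iff]

section QAlgebra

variable {R : Type*} [CommRing R] [Algebra ℚ R]

theorem coeff_expS_of_lt {w : R⟦X⟧} (hw : constantCoeff w = 0) {n K : ℕ} (hn : n < K) :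
    coeff n (expS w) = coeff n (∑ k ∈ Finset.range K, (k.factorial : ℚ)⁻¹ • w ^ k) := by
  simp only [expS, coeff_mk, map_sum, coeff_smul]
  refine Finset.sum_subset (Finset.range_subset_range.mpr hn) fun k _ hk => ?_
  have hnk : n < k := by simpa using hk
  rw [X_pow_dvd_iff.mp (pow_dvd_pow_of_dvd (X_dvd_iff.mpr hw) k) n hnk, smul_zero]

theorem map_expS {S F : Type*} [CommRing S] [Algebra ℚ S] [FunLike F R⟦X⟧ S]
    [RingHomClass F R⟦X⟧ S] (f : F) {K : ℕ} (hK : f X ^ K = 0) {w : R⟦X⟧}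
    (hw : constantCoeff w = 0) : f (expS w) = IsNilpotent.exp (f w) := by
  set P := ∑ k ∈ Finset.range K, (k.factorial : ℚ)⁻¹ • w ^ k
  obtain ⟨t, ht⟩ : X ^ K ∣ expS w - P :=
    X_pow_dvd_iff.mpr fun n hn => by rw [map_sub, coeff_expS_of_lt hw hn, sub_self]
  rw [← sub_add_cancel (expS w) P, ht, map_add, map_mul, map_pow, hK, zero_mul, zero_add,
    IsNilpotent.exp_eq_sum (map_pow_eq_zero_of_constantCoeff_eq_zero f hK hw), map_sum]
  simp only [map_rat_smul, map_pow]

theorem expS_add {u v : R⟦X⟧} (hu : constantCoeff u = 0) (hv : constantCoeff v = 0) :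
    expS (u + v) = expS u * expS v := by
  ext N
  set f := Ideal.Quotient.mk (Ideal.span {(X : R⟦X⟧) ^ (N + 1)})
  have hX : f X ^ (N + 1) = 0 := by
    rw [← map_pow, Ideal.Quotient.eq_zero_iff_mem]
    exact Ideal.mem_span_singleton_self _
  have huv : constantCoeff (u + v) = 0 := by rw [map_add, hu, hv, add_zero]
  have hf : f (expS (u + v)) = f (expS u * expS v) := by
    rw [map_mul, map_expS f hX huv, map_expS f hX hu, map_expS f hX hv, map_add,
      IsNilpotent.exp_add_of_commute (Commute.all _ _)
        ⟨_, map_pow_eq_zero_of_constantCoeff_eq_zero f hX hu⟩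
        ⟨_, map_pow_eq_zero_of_constantCoeff_eq_zero f hX hv⟩]
  rw [Ideal.Quotient.eq, Ideal.mem_span_singleton, X_pow_dvd_iff] at hf
  exact sub_eq_zero.mp (hf N N.lt_succ_self)

theorem expS_sum {ι : Type*} (s : Finset ι) {f : ι → R⟦X⟧}
    (hf : ∀ i ∈ s, constantCoeff (f i) = 0) : expS (∑ i ∈ s, f i) = ∏ i ∈ s, expS (f i) := by
  classical
  induction s using Finset.induction_on with
  | empty =>
    ext N
    simp [expS, coeff_one, Finset.sum_range_succ']
  | insert a s ha ih =>
    rw [Finset.sum_insert ha, Finset.prod_insert ha,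
      expS_add (hf a (Finset.mem_insert_self a s))
        (by rw [map_sum]; exact Finset.sum_eq_zero fun i hi => hf i (Finset.mem_insert_of_mem hi)),
      ih fun i hi => hf i (Finset.mem_insert_of_mem hi)]

theorem coeff_coeff_expS_congr {N M : ℕ} {u v : R⟦X⟧⟦X⟧} (hu : constantCoeff u = 0)
    (hv : constantCoeff v = 0) (h : ∀ n ≤ N, ∀ m ≤ M, coeff m (coeff n u) = coeff m (coeff n v)) :
    coeff M (coeff N (expS u)) = coeff M (coeff N (expS v)) := by
  have hX : truncRect (R := R) N M X ^ (N + 1) = 0 := by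
    rw [← map_pow, truncRect_eq_zero_iff]
    intro n hn m _
    simp [coeff_X_pow, (Nat.lt_succ_of_le hn).ne]
  have huv : truncRect N M u = truncRect N M v := by
    rw [← sub_eq_zero, ← map_sub, truncRect_eq_zero_iff]
    simpa [sub_eq_zero] using h
  have hexp : truncRect N M (expS u - expS v) = 0 := by
    rw [map_sub, map_expS _ hX hu, map_expS _ hX hv, huv, sub_self]
  simpa [sub_eq_zero] using truncRect_eq_zero_iff.mp hexp N le_rfl M le_rfl

theorem constantCoeff_log (u : R⟦X⟧) : constantCoeff (log u) = 0 := by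
  rw [← coeff_zero_eq_constantCoeff_apply, log, coeff_mk]
  simp

theorem coeff_log_one_sub_C_mul_X_pow (a : R) {b : ℕ} (hb : 0 < b) (n : ℕ) :
    coeff n (log (1 - PowerSeries.C a * X ^ b)) =
      if b ∈ n.divisors then -((n / b : ℕ) : ℚ)⁻¹ • a ^ (n / b) else 0 := by
  simp only [log, coeff_mk, sub_sub_cancel, coeff_C_mul_X_pow_pow, smul_ite, smul_zero]
  split_ifs with h
  · obtain ⟨⟨j, rfl⟩, hn⟩ := Nat.mem_divisors.mp h
    have hj : 1 ≤ j := Nat.pos_of_ne_zero (right_ne_zero_of_mul hn)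
    rw [Nat.mul_div_cancel_left j hb,
      Finset.sum_eq_single_of_mem j (Finset.mem_Icc.mpr ⟨hj, Nat.le_mul_of_pos_left j hb⟩)]
    · rw [if_pos rfl]
    · exact fun k _ hk => if_neg fun h => hk (Nat.eq_of_mul_eq_mul_left hb h).symm
  · refine Finset.sum_eq_zero fun k hk => if_neg ?_
    rintro rfl
    have hk : 1 ≤ k := (Finset.mem_Icc.mp hk).1
    exact h (Nat.mem_divisors.mpr ⟨dvd_mul_right b k, by positivity⟩)

end QAlgebra

theorem sum_range_ite_eq_mul {β : Type*} [AddCommMonoid β] {k m' M : ℕ} (hk : 0 < k)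
    (hm' : m' ≤ M) (g : ℕ → β) :
    ∑ m ∈ Finset.range (M + 1), (if m' = m * k then g m else 0) =
      if k ∣ m' then g (m' / k) else 0 := by
  split_ifs with h
  · obtain ⟨j, rfl⟩ := h
    rw [Nat.mul_div_cancel_left j hk,
      Finset.sum_eq_single_of_mem j (Finset.mem_range.mpr (by nlinarith))]
    · rw [if_pos (mul_comm k j)]
    · refine fun m _ hm => if_neg fun h => hm ?_
      rw [mul_comm k j] at h
      exact (Nat.eq_of_mul_eq_mul_right hk h).symm
  · exact Finset.sum_eq_zero fun m _ => if_neg fun h' => h ⟨m, h'.trans (mul_comm m k)⟩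

theorem coeff_coeff_log_one_sub_mon {b : ℕ} (hb : 0 < b) (m : ℕ) (l : ℤ) (n m' : ℕ) :
    coeff m' (coeff n (log (1 - mon b m l))) =
      if b ∈ n.divisors then
        if m' = m * (n / b) then -((n / b : ℕ) : ℚ)⁻¹ • T ((n / b : ℕ) * l) else 0
      else 0 := by
  rw [mon, coeff_log_one_sub_C_mul_X_pow _ hb]
  split_ifs <;> simp_all [coeff_C_mul_X_pow_pow, T_pow]

theorem coeff_coeff_sum_smul_log (α : ℕ → ℕ → ℤ → ℚ) (S : ℕ → ℕ → Finset ℤ) {N M n m' : ℕ}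
    (hn : n ≤ N) (hm' : m' ≤ M) :
    coeff m' (coeff n (∑ b ∈ Finset.Icc 1 N, ∑ m ∈ Finset.range (M + 1), ∑ l ∈ S b m,
        α b m l • log (1 - mon b m l))) =
      ∑ a ∈ n.divisors with a ∣ m', ∑ l ∈ S (n / a) (m' / a),
        (-α (n / a) (m' / a) l / a) • T (a * l) := by
  have hdiv : n.divisors ⊆ Finset.Icc 1 N := fun b hb =>
    Finset.mem_Icc.mpr ⟨Nat.pos_of_mem_divisors hb, (Nat.divisor_le hb).trans hn⟩
  have hterm : ∀ b ∈ Finset.Icc 1 N,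
      coeff m' (coeff n (∑ m ∈ Finset.range (M + 1), ∑ l ∈ S b m,
        α b m l • log (1 - mon b m l))) =
      if b ∈ n.divisors then
        if n / b ∣ m' then
          ∑ l ∈ S b (m' / (n / b)), (-α b (m' / (n / b)) l / (n / b : ℕ)) • T ((n / b : ℕ) * l)
        else 0
      else 0 := by
    intro b hb
    simp only [map_sum, coeff_smul, coeff_coeff_log_one_sub_mon (Finset.mem_Icc.mp hb).1]
    by_cases hbn : b ∈ n.divisors
    · have hk : 0 < n / b := Nat.div_pos (Nat.divisor_le hbn) (Nat.pos_of_mem_divisors hbn)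
      simp only [if_pos hbn, smul_ite, smul_zero, Finset.sum_ite_irrel, Finset.sum_const_zero,
        smul_smul]
      rw [sum_range_ite_eq_mul hk hm']
      simp only [div_eq_mul_inv, mul_neg, neg_mul]
    · simp [hbn]
  rw [map_sum, map_sum, Finset.sum_congr rfl hterm, Finset.sum_ite_mem,
    Finset.inter_eq_right.mpr hdiv, Finset.sum_filter]
  refine (Finset.sum_congr rfl fun b hb => ?_).trans (Nat.sum_div_divisors n _)
  obtain ⟨hbn, hn0⟩ := Nat.mem_divisors.mp hb
  rw [Nat.div_div_self hbn hn0]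

/-- Let `c, d : ℕ×ℤ → ℚ` be such that for each `m` the set
`{n | c(m,n) ≠ 0 ∨ d(m,n) ≠ 0}` is finite, and let `A, B ∈ ℚ`.  Then in `ℚ[y^{±1}][[q]][[p]]`,
`exp( ∑_{a,b≥1} ∑_{m≥0} ∑_{l∈ℤ} (c(mb,l) + (blA + b²B)d(mb,l)) p^{ab} y^{al} q^{am} / a )
 = ∏_{b≥1, m≥0, l∈ℤ} (1 − p^b y^l q^m)^{−c(mb,l) − lbA·d(mb,l) − b²B·d(mb,l)}`,
with `(1−t)^α := exp(α log(1−t))`.  Both sides converge `p`-adically (each factor of the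
product is `≡ 1 mod p^b`): the sum is given coefficientwise (its `(p^N q^M)`-coefficient is a
finite sum over `a ∣ N`, `a ∣ M` with `b = N/a`, `m = M/a`, plus the finite sum over `l`, here
expressed by `finsum`), and the `(p^N q^M)`-coefficient of the product only involves the
finitely many factors with `b ≤ N`, `m ≤ M` and `l` in the finite set given by the hypothesis
(all other factors equal `1`). -/
theorem statement3 (c d : ℕ → ℤ → ℚ)
    (hfin : ∀ m : ℕ, {n : ℤ | c m n ≠ 0 ∨ d m n ≠ 0}.Finite) (A B : ℚ) :
    expS (PowerSeries.mk fun N => PowerSeries.mk fun M =>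
        ∑ a ∈ N.divisors.filter (· ∣ M), ∑ᶠ l : ℤ,
          LaurentPolynomial.C
              ((c ((M / a) * (N / a)) l +
                  (((N / a : ℕ) : ℚ) * (l : ℚ) * A + ((N / a : ℕ) : ℚ) ^ 2 * B) *
                    d ((M / a) * (N / a)) l) / (a : ℚ)) *
            T ((a : ℤ) * l)) =
      (PowerSeries.mk fun N => PowerSeries.mk fun M =>
        coeff (R := L) M (coeff (R := PowerSeries L) N
          (∏ b ∈ Finset.Icc 1 N, ∏ m ∈ Finset.range (M + 1), ∏ l ∈ (hfin (m * b)).toFinset,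
            rpow (1 - mon b m l)
              (-(c (m * b) l) - (l : ℚ) * (b : ℚ) * A * d (m * b) l -
                (b : ℚ) ^ 2 * B * d (m * b) l)))) := by
  refine PowerSeries.ext fun N => PowerSeries.ext fun M => ?_
  simp (disch := simp [map_sum, constantCoeff_log]) only [coeff_mk, rpow, ← expS_sum]
  refine coeff_coeff_expS_congr ?_ (by simp [map_sum, constantCoeff_log])
    fun n hn m' hm' => ?_
  · ext M
    simp [← coeff_zero_eq_constantCoeff_apply]
  rw [coeff_coeff_sum_smul_log _ _ hn hm', coeff_mk, coeff_mk]
  refine Finset.sum_congr rfl fun a _ => ?_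
  rw [finsum_eq_sum_of_support_subset _ ?_]
  · refine Finset.sum_congr rfl fun l _ => ?_
    rw [← LaurentPolynomial.smul_eq_C_mul]
    congr 1
    ring
  · intro l hl
    contrapose! hl
    simp_all

end Formal
end
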